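/- The maps T_± := id_{B[[λ]]} + Δ_± ∘ Q, where Q := Σ_{n≥1} λⁿ P_(n) : B[[λ]] → A[[λ]] and Δ_± acts coefficientwise on A[[λ]], restrict to ℝ[[λ]]-module isomorphisms from the deformed solution module Sol_{P_⋆} := { u ∈ B[[λ]] : P_⋆(u) = 0 } onto the undeformed solution module Sol_P := { u ∈ B[[λ]] : P(u) = 0 }, with inverse T_±^{-1} = id_{B[[λ]]} − Δ_⋆± ∘ Q. -/

import Mathlib

open Finset

noncomputable section

namespace NCQFT

theorem sum_ad_assoc {M : Type*} [AddCommMonoid M] (n : ℕ) (G : ℕ → ℕ → ℕ → M) :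
    ∑ p ∈ antidiagonal n, ∑ q ∈ antidiagonal p.2, G p.1 q.1 q.2
      = ∑ p ∈ antidiagonal n, ∑ q ∈ antidiagonal p.1, G q.1 q.2 p.2 := by
  rw [Finset.sum_sigma', Finset.sum_sigma']
  refine Finset.sum_nbij' (fun x => ⟨(x.1.1 + x.2.1, x.2.2), (x.1.1, x.2.1)⟩)
    (fun x => ⟨(x.2.1, x.2.2 + x.1.2), (x.2.2, x.1.2)⟩) ?_ ?_ ?_ ?_ ?_
  · rintro ⟨⟨a, k⟩, b, c⟩ h
    simp only [Finset.mem_sigma, HasAntidiagonal.mem_antidiagonal] at h ⊢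
    refine ⟨by omega, ?_⟩
    try trivial
    try omega
  · rintro ⟨⟨i, c⟩, a, b⟩ h
    simp only [Finset.mem_sigma, HasAntidiagonal.mem_antidiagonal] at h ⊢
    refine ⟨by omega, ?_⟩
    try trivial
    try omega
  · rintro ⟨⟨a, k⟩, b, c⟩ h
    simp only [Finset.mem_sigma, HasAntidiagonal.mem_antidiagonal] at h
    obtain ⟨-, h2⟩ := h
    subst h2
    rfl
  · rintro ⟨⟨i, c⟩, a, b⟩ h
    simp only [Finset.mem_sigma, HasAntidiagonal.mem_antidiagonal] at h
    obtain ⟨-, h2⟩ := h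
    subst h2
    rfl
  · rintro ⟨⟨a, k⟩, b, c⟩ h
    rfl

theorem sum_ad_swap {M : Type*} [AddCommMonoid M] (n : ℕ) (G : ℕ → ℕ → ℕ → M) :
    ∑ p ∈ antidiagonal n, ∑ q ∈ antidiagonal p.2, G p.1 q.1 q.2
      = ∑ p ∈ antidiagonal n, ∑ q ∈ antidiagonal p.2, G q.1 p.1 q.2 := by
  rw [Finset.sum_sigma', Finset.sum_sigma']
  refine Finset.sum_nbij' (fun x => ⟨(x.2.1, x.1.1 + x.2.2), (x.1.1, x.2.2)⟩)
    (fun x => ⟨(x.2.1, x.1.1 + x.2.2), (x.1.1, x.2.2)⟩) ?_ ?_ ?_ ?_ ?_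
  · rintro ⟨⟨a, k⟩, b, c⟩ h
    simp only [Finset.mem_sigma, HasAntidiagonal.mem_antidiagonal] at h ⊢
    refine ⟨by omega, ?_⟩
    try trivial
    try omega
  · rintro ⟨⟨b, k⟩, a, c⟩ h
    simp only [Finset.mem_sigma, HasAntidiagonal.mem_antidiagonal] at h ⊢
    refine ⟨by omega, ?_⟩
    try trivial
    try omega
  · rintro ⟨⟨a, k⟩, b, c⟩ h
    simp only [Finset.mem_sigma, HasAntidiagonal.mem_antidiagonal] at h
    obtain ⟨-, h2⟩ := h
    subst h2
    rfl
  · rintro ⟨⟨b, k⟩, a, c⟩ h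
    simp only [Finset.mem_sigma, HasAntidiagonal.mem_antidiagonal] at h
    obtain ⟨-, h2⟩ := h
    subst h2
    rfl
  · rintro ⟨⟨a, k⟩, b, c⟩ h
    rfl

variable {K : Type*} [CommRing K]

/-- The Cauchy-product scalar multiplication of `K[[λ]]` on `V[[λ]] = (ℕ → V)`. -/
def fpsSMul {V : Type*} [AddCommGroup V] [Module K V] (c : PowerSeries K) (v : ℕ → V) :
    ℕ → V :=
  fun n => ∑ p ∈ antidiagonal n, PowerSeries.coeff (R := K) p.1 c • v p.2

theorem fpsSMul_one {V : Type*} [AddCommGroup V] [Module K V] (v : ℕ → V) :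
    fpsSMul (1 : PowerSeries K) v = v := by
  funext n
  rw [fpsSMul, Finset.sum_eq_single (0, n)]
  · simp
  · rintro ⟨i, j⟩ hmem hne
    rw [PowerSeries.coeff_one, if_neg, zero_smul]
    rintro rfl
    apply hne
    simp only [HasAntidiagonal.mem_antidiagonal] at hmem
    simp [← hmem]
  · intro h
    exact absurd (by simp) h

theorem fpsSMul_mul {V : Type*} [AddCommGroup V] [Module K V] (c d : PowerSeries K)
    (v : ℕ → V) : fpsSMul (c * d) v = fpsSMul c (fpsSMul d v) := by
  funext n
  rw [fpsSMul]
  calc ∑ p ∈ antidiagonal n, PowerSeries.coeff (R := K) p.1 (c * d) • v p.2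
      = ∑ p ∈ antidiagonal n, ∑ q ∈ antidiagonal p.1,
          (PowerSeries.coeff (R := K) q.1 c * PowerSeries.coeff (R := K) q.2 d) • v p.2 := by
        refine Finset.sum_congr rfl fun p _ => ?_
        rw [PowerSeries.coeff_mul, Finset.sum_smul]
    _ = ∑ p ∈ antidiagonal n, ∑ q ∈ antidiagonal p.2,
          (PowerSeries.coeff (R := K) p.1 c * PowerSeries.coeff (R := K) q.1 d) • v q.2 :=
        (sum_ad_assoc n fun a b e => (PowerSeries.coeff (R := K) a c * PowerSeries.coeff (R := K) b d) • v e).symm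
    _ = fpsSMul c (fpsSMul d v) n := by
        rw [fpsSMul]
        refine Finset.sum_congr rfl fun p _ => ?_
        rw [fpsSMul, Finset.smul_sum]
        exact Finset.sum_congr rfl fun q _ => (mul_smul _ _ _)

instance fpsModule {V : Type*} [AddCommGroup V] [Module K V] :
    Module (PowerSeries K) (ℕ → V) where
  smul := fpsSMul
  one_smul := fpsSMul_one
  mul_smul := fpsSMul_mul
  smul_zero c := by
    funext n
    show fpsSMul c (0 : ℕ → V) n = 0
    simp [fpsSMul]
  smul_add c u v := by
    funext n
    show fpsSMul c (u + v) n = fpsSMul c u n + fpsSMul c v n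
    simp [fpsSMul, Finset.sum_add_distrib, smul_add]
  add_smul c d v := by
    funext n
    show fpsSMul (c + d) v n = fpsSMul c v n + fpsSMul d v n
    simp [fpsSMul, Finset.sum_add_distrib, add_smul]
  zero_smul v := by
    funext n
    show fpsSMul (0 : PowerSeries K) v n = 0
    simp [fpsSMul]

theorem fps_smul_apply {V : Type*} [AddCommGroup V] [Module K V]
    (c : PowerSeries K) (v : ℕ → V) (n : ℕ) :
    (c • v) n = ∑ p ∈ antidiagonal n, PowerSeries.coeff (R := K) p.1 c • v p.2 := rfl

/-- The `K[[λ]]`-linear map `V[[λ]] → W[[λ]]` induced by a family of `K`-linear maps,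
`F_⋆ = Σ λⁿ F_(n)`. -/
def starMap {V W : Type*} [AddCommGroup V] [Module K V] [AddCommGroup W] [Module K W]
    (F : ℕ → V →ₗ[K] W) : (ℕ → V) →ₗ[PowerSeries K] (ℕ → W) where
  toFun u := fun n => ∑ p ∈ antidiagonal n, F p.1 (u p.2)
  map_add' u v := by
    funext n
    simp [Finset.sum_add_distrib]
  map_smul' c u := by
    funext n
    show ∑ p ∈ antidiagonal n, F p.1 ((c • u) p.2)
        = (c • fun m => ∑ q ∈ antidiagonal m, F q.1 (u q.2)) n
    simp only [fps_smul_apply, map_sum, map_smul, Finset.smul_sum]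
    exact sum_ad_swap n fun a b e => PowerSeries.coeff (R := K) b c • F a (u e)

theorem starMap_apply {V W : Type*} [AddCommGroup V] [Module K V] [AddCommGroup W] [Module K W]
    (F : ℕ → V →ₗ[K] W) (u : ℕ → V) (n : ℕ) :
    starMap F u n = ∑ p ∈ antidiagonal n, F p.1 (u p.2) := rfl

/-- The coefficientwise application of a single `K`-linear map, as a `K[[λ]]`-linear map. -/
def cwMap {V W : Type*} [AddCommGroup V] [Module K V] [AddCommGroup W] [Module K W]
    (F : V →ₗ[K] W) : (ℕ → V) →ₗ[PowerSeries K] (ℕ → W) where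
  toFun u := fun n => F (u n)
  map_add' u v := by funext n; simp
  map_smul' c u := by
    funext n
    show F ((c • u) n) = (c • fun m => F (u m)) n
    simp only [fps_smul_apply, map_sum, map_smul]

theorem cwMap_apply {V W : Type*} [AddCommGroup V] [Module K V] [AddCommGroup W] [Module K W]
    (F : V →ₗ[K] W) (u : ℕ → V) (n : ℕ) : cwMap F u n = F (u n) := rfl


variable {B : Type*} [AddCommGroup B] [Module ℝ B]

/-- `chain D Pn [j₁, …, j_k] = D ∘ P_(j₁) ∘ D ∘ P_(j₂) ∘ ⋯ ∘ D ∘ P_(j_k) ∘ D`. -/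
def chain (D : B →ₗ[ℝ] B) (Pn : ℕ → B →ₗ[ℝ] B) : List ℕ → (B →ₗ[ℝ] B)
  | [] => D
  | j :: t => D ∘ₗ Pn j ∘ₗ chain D Pn t

/-- The `n`-th coefficient `Δ_(n)±` of the deformed Green's operator:
`Δ_(n)± = Σ_{k=1}^{n} Σ_{j₁+⋯+j_k = n, jᵢ ≥ 1} (−1)^k Δ_± ∘ P_(j₁) ∘ Δ_± ∘ ⋯ ∘ Δ_± ∘ P_(j_k) ∘ Δ_±`,
realized as a sum over all compositions `(j₁, …, j_k)` of `n` (for `n = 0` it equals `Δ_±`). -/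
def dGreen (D : B →ₗ[ℝ] B) (Pn : ℕ → B →ₗ[ℝ] B) (n : ℕ) : B →ₗ[ℝ] B :=
  ∑ c : Composition n, ((-1 : ℝ) ^ c.blocks.length) • chain D Pn c.blocks

/-- The family `Q_(n)` of `Q := Σ_{n ≥ 1} λⁿ P_(n)` (the `λ⁰`-coefficient is dropped). -/
def posPart (Pn : ℕ → B →ₗ[ℝ] B) : ℕ → B →ₗ[ℝ] B :=
  fun n => if n = 0 then 0 else Pn n

/-- The `ℝ[[λ]]`-bilinear extension of a bilinear form `β : B × B → ℝ` to `B[[λ]]`. -/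
def betaSeries (β : B →ₗ[ℝ] B →ₗ[ℝ] ℝ) (u v : ℕ → B) : PowerSeries ℝ :=
  PowerSeries.mk fun n => ∑ p ∈ antidiagonal n, β (u p.1) (v p.2)

/-- The family `P_(n)`, restricted to maps `A → A`
(using `P(A) ⊆ A` and `P_(n)(B) ⊆ A` for `n ≥ 1`). -/
def restA (A : Submodule ℝ B) (Pn : ℕ → B →ₗ[ℝ] B) (hPA : ∀ a ∈ A, Pn 0 a ∈ A)
    (hPpos : ∀ n, 0 < n → ∀ u : B, Pn n u ∈ A) (n : ℕ) : ↥A →ₗ[ℝ] ↥A :=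
  (Pn n).restrict (p := A) (q := A) (fun x hx => by
    rcases Nat.eq_zero_or_pos n with h | h
    · exact h ▸ hPA x hx
    · exact hPpos n h x)



/-! ### Auxiliary lemmas -/

theorem NC_comp_zero_blocks (c : Composition 0) : c.blocks = [] := by
  have h := c.blocks_sum
  cases hb : c.blocks with
  | nil => rfl
  | cons a t =>
    exfalso
    have ha : 0 < a := c.blocks_pos (hb ▸ List.mem_cons_self (a := a) (l := t))
    rw [hb, List.sum_cons] at h
    omega

theorem NC_dGreen_zero (D : B →ₗ[ℝ] B) (Pn : ℕ → B →ₗ[ℝ] B) : dGreen D Pn 0 = D := by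
  rw [dGreen, Fintype.sum_eq_single (⟨[], by simp, by simp⟩ : Composition 0)]
  · simp [chain]
  · intro c hc
    exact absurd (Composition.ext (NC_comp_zero_blocks c)) hc

theorem NC_dGreen_rec (D : B →ₗ[ℝ] B) (Pn : ℕ → B →ₗ[ℝ] B) {n : ℕ} (hn : n ≠ 0) (a : B) :
    dGreen D Pn n a
      = -∑ p ∈ (antidiagonal n).erase (0, n), D (Pn p.1 (dGreen D Pn p.2 a)) := by
  have step : ∀ p : ℕ × ℕ, D (Pn p.1 (dGreen D Pn p.2 a))
      = ∑ c : Composition p.2, ((-1 : ℝ) ^ c.blocks.length) • chain D Pn (p.1 :: c.blocks) a := by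
    intro p
    rw [dGreen, LinearMap.sum_apply, map_sum, map_sum]
    refine Finset.sum_congr rfl fun c _ => ?_
    rw [LinearMap.smul_apply, map_smul, map_smul]
    rfl
  have key : ∑ p ∈ (antidiagonal n).erase (0, n), -D (Pn p.1 (dGreen D Pn p.2 a))
      = dGreen D Pn n a := calc
    ∑ p ∈ (antidiagonal n).erase (0, n), -D (Pn p.1 (dGreen D Pn p.2 a))
      = ∑ p ∈ (antidiagonal n).erase (0, n), ∑ c : Composition p.2,
          ((-1 : ℝ) ^ (c.blocks.length + 1)) • chain D Pn (p.1 :: c.blocks) a := by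
        refine Finset.sum_congr rfl fun p _ => ?_
        rw [step, ← Finset.sum_neg_distrib]
        refine Finset.sum_congr rfl fun c _ => ?_
        rw [pow_succ, mul_comm, neg_one_mul, neg_smul]
    _ = dGreen D Pn n a := by
        rw [Finset.sum_sigma', dGreen, LinearMap.sum_apply]
        refine Finset.sum_bij (i := fun x hx =>
          (⟨x.1.1 :: x.2.blocks, ?_, ?_⟩ : Composition n)) ?_ ?_ ?_ ?_
        · intro j hj
          rcases List.mem_cons.1 hj with h | h
          · subst h
            simp only [Finset.mem_sigma, Finset.mem_erase, HasAntidiagonal.mem_antidiagonal] at hx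
            rcases Nat.eq_zero_or_pos x.1.1 with h' | h'
            · exact absurd (Prod.ext h' (by omega)) hx.1.1
            · exact h'
          · exact x.2.blocks_pos h
        · simp only [List.sum_cons, x.2.blocks_sum]
          simp only [Finset.mem_sigma, Finset.mem_erase, HasAntidiagonal.mem_antidiagonal] at hx
          exact hx.1.2
        · intro x hx; exact Finset.mem_univ _
        · rintro ⟨⟨p1, p2⟩, c⟩ hx ⟨⟨q1, q2⟩, d⟩ hy h
          have hb : p1 :: c.blocks = q1 :: d.blocks := congrArg Composition.blocks h
          injection hb with h1 h2
          simp only [Finset.mem_sigma, Finset.mem_erase, HasAntidiagonal.mem_antidiagonal] at hx hy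
          have h3 : p2 = q2 := by omega
          subst h1; subst h3
          exact congrArg _ (Composition.ext h2)
        · intro c _
          have hne : c.blocks ≠ [] := by
            intro h
            exact hn (by rw [← c.blocks_sum, h]; rfl)
          obtain ⟨j, t, hb⟩ := List.exists_cons_of_ne_nil hne
          have hjpos : 0 < j := c.blocks_pos (hb ▸ List.mem_cons_self (a := j) (l := t))
          have hsum : j + t.sum = n := by rw [← c.blocks_sum, hb, List.sum_cons]
          refine ⟨⟨(j, t.sum), ⟨t, fun hi => c.blocks_pos (hb ▸ List.mem_cons_of_mem j hi), rfl⟩⟩,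
            ?_, ?_⟩
          · simp only [Finset.mem_sigma, Finset.mem_erase, HasAntidiagonal.mem_antidiagonal]
            exact ⟨⟨by rintro h; rw [Prod.mk.injEq] at h; omega, hsum⟩, Finset.mem_univ _⟩
          · exact Composition.ext hb.symm
        · rintro ⟨⟨p1, p2⟩, c⟩ hx
          simp only [LinearMap.smul_apply]
          rfl
  rw [← key, Finset.sum_neg_distrib]

theorem NC_erase_fst_ne_zero {n : ℕ} {p : ℕ × ℕ}
    (hp : p ∈ (antidiagonal n).erase (0, n)) : p.1 ≠ 0 := by
  rw [Finset.mem_erase, HasAntidiagonal.mem_antidiagonal] at hp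
  intro h
  exact hp.1 (Prod.ext h (by omega))

theorem NC_dGreen_image (A : Submodule ℝ B) (Pn : ℕ → B →ₗ[ℝ] B)
    (hPpos : ∀ n, 0 < n → ∀ u : B, Pn n u ∈ A) (D : B →ₗ[ℝ] B)
    (m : ℕ) {a : B} (ha : a ∈ A) : ∃ b ∈ A, dGreen D Pn m a = D b := by
  rcases eq_or_ne m 0 with rfl | hm
  · exact ⟨a, ha, by rw [NC_dGreen_zero]⟩
  · refine ⟨-∑ p ∈ (antidiagonal m).erase (0, m), Pn p.1 (dGreen D Pn p.2 a), ?_, ?_⟩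
    · exact A.neg_mem (A.sum_mem fun p hp =>
        hPpos p.1 (Nat.pos_of_ne_zero (NC_erase_fst_ne_zero hp)) _)
    · rw [NC_dGreen_rec D Pn hm, map_neg, map_sum]

theorem NC_factA (A : Submodule ℝ B) (Pn : ℕ → B →ₗ[ℝ] B)
    (hPpos : ∀ n, 0 < n → ∀ u : B, Pn n u ∈ A) (D : B →ₗ[ℝ] B)
    (hPD : ∀ a ∈ A, Pn 0 (D a) = a) {a : B} (ha : a ∈ A) (n : ℕ) :
    ∑ p ∈ antidiagonal n, Pn p.1 (dGreen D Pn p.2 a) = if n = 0 then a else 0 := by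
  rcases eq_or_ne n 0 with rfl | hn
  · simp [NC_dGreen_zero, hPD a ha]
  · rw [if_neg hn,
      ← Finset.add_sum_erase _ _ (show ((0 : ℕ), n) ∈ antidiagonal n by simp)]
    have h1 : Pn 0 (dGreen D Pn n a)
        = -∑ p ∈ (antidiagonal n).erase (0, n), Pn p.1 (dGreen D Pn p.2 a) := by
      rw [NC_dGreen_rec D Pn hn a, map_neg, map_sum]
      congr 1
      refine Finset.sum_congr rfl fun p hp => ?_
      exact hPD _ (hPpos p.1 (Nat.pos_of_ne_zero (NC_erase_fst_ne_zero hp)) _)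
    show Pn 0 (dGreen D Pn n a) + _ = 0
    rw [h1, neg_add_cancel]

theorem NC_sum_image {ι : Type*} (A : Submodule ℝ B) (D : B →ₗ[ℝ] B)
    (s : Finset ι) (f : ι → B) (h : ∀ i ∈ s, ∃ b ∈ A, f i = D b) :
    ∃ b ∈ A, ∑ i ∈ s, f i = D b := by
  classical
  induction s using Finset.induction_on with
  | empty => exact ⟨0, A.zero_mem, by simp⟩
  | insert _ _ hni ih =>
    rename_i i s'
    obtain ⟨b, hb, heq⟩ := ih fun j hj => h j (Finset.mem_insert_of_mem hj)
    obtain ⟨c, hc, hceq⟩ := h i (Finset.mem_insert_self i s')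
    exact ⟨c + b, A.add_mem hc hb, by rw [Finset.sum_insert hni, heq, hceq, map_add]⟩

theorem NC_inj (A : Submodule ℝ B) (Pn : ℕ → B →ₗ[ℝ] B) (D : B →ₗ[ℝ] B)
    (hPD : ∀ a ∈ A, Pn 0 (D a) = a)
    (x : ℕ → B) (hx : ∀ n, ∃ b ∈ A, x n = D b)
    (hker : starMap (K := ℝ) Pn x = 0) : x = 0 := by
  have h0 : ∀ n, ∑ p ∈ antidiagonal n, Pn p.1 (x p.2) = 0 := by
    intro n
    calc ∑ p ∈ antidiagonal n, Pn p.1 (x p.2) = starMap (K := ℝ) Pn x n := rfl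
      _ = 0 := by rw [hker]; rfl
  have H : ∀ n, x n = 0 := by
    intro n
    induction n using Nat.strong_induction_on with
    | _ n ih =>
      have hsum := h0 n
      rw [Finset.sum_eq_single ((0 : ℕ), n)] at hsum
      · obtain ⟨b, hb, heq⟩ := hx n
        have hb0 : b = 0 := by
          have h' := hPD b hb
          rw [← heq] at h'
          rw [← h', hsum]
        rw [heq, hb0, map_zero]
      · rintro ⟨i, j⟩ hmem hne
        rw [HasAntidiagonal.mem_antidiagonal] at hmem
        have hj : j < n := by
          rcases Nat.eq_zero_or_pos i with h' | h'
          · exact absurd (Prod.ext h' (by omega)) hne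
          · omega
        rw [ih j hj, map_zero]
      · intro h
        exact absurd (by simp) h
  funext n
  exact H n

theorem NC_starMap_split (Pn : ℕ → B →ₗ[ℝ] B) (u : ℕ → B) (n : ℕ) :
    starMap (K := ℝ) Pn u n = Pn 0 (u n) + starMap (K := ℝ) (posPart Pn) u n := by
  rw [starMap_apply, starMap_apply,
    ← Finset.add_sum_erase _ _ (show ((0 : ℕ), n) ∈ antidiagonal n by simp),
    ← Finset.add_sum_erase _ (fun p => posPart Pn p.1 (u p.2))
      (show ((0 : ℕ), n) ∈ antidiagonal n by simp)]
  have h0 : posPart Pn 0 (u n) = 0 := by simp [posPart]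
  show Pn 0 (u n) + _ = Pn 0 (u n) + (posPart Pn 0 (u n) + _)
  rw [h0, zero_add]
  congr 1
  refine Finset.sum_congr rfl fun p hp => ?_
  rw [posPart, if_neg (NC_erase_fst_ne_zero hp)]

theorem NC_Q_mem (A : Submodule ℝ B) (Pn : ℕ → B →ₗ[ℝ] B)
    (hPpos : ∀ n, 0 < n → ∀ u : B, Pn n u ∈ A) (u : ℕ → B) (n : ℕ) :
    starMap (K := ℝ) (posPart Pn) u n ∈ A := by
  rw [starMap_apply]
  refine A.sum_mem fun p _ => ?_
  rcases eq_or_ne p.1 0 with h | h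
  · rw [posPart, h, if_pos rfl]
    exact A.zero_mem
  · rw [posPart, if_neg h]
    exact hPpos p.1 (Nat.pos_of_ne_zero h) _

theorem NC_PstarDstar (A : Submodule ℝ B) (Pn : ℕ → B →ₗ[ℝ] B)
    (hPpos : ∀ n, 0 < n → ∀ u : B, Pn n u ∈ A) (D : B →ₗ[ℝ] B)
    (hPD : ∀ a ∈ A, Pn 0 (D a) = a)
    (φ : ℕ → B) (hφ : ∀ n, φ n ∈ A) :
    starMap (K := ℝ) Pn (starMap (K := ℝ) (dGreen D Pn) φ) = φ := by
  funext n
  rw [starMap_apply]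
  calc ∑ p ∈ antidiagonal n, Pn p.1 (starMap (K := ℝ) (dGreen D Pn) φ p.2)
      = ∑ p ∈ antidiagonal n, ∑ q ∈ antidiagonal p.2,
          Pn p.1 (dGreen D Pn q.1 (φ q.2)) := by
        refine Finset.sum_congr rfl fun p _ => ?_
        rw [starMap_apply, map_sum]
    _ = ∑ p ∈ antidiagonal n, ∑ q ∈ antidiagonal p.1,
          Pn q.1 (dGreen D Pn q.2 (φ p.2)) :=
        sum_ad_assoc n fun a b c => Pn a (dGreen D Pn b (φ c))
    _ = ∑ p ∈ antidiagonal n, if p.1 = 0 then φ p.2 else 0 := by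
        refine Finset.sum_congr rfl fun p _ => ?_
        rw [NC_factA A Pn hPpos D hPD (hφ p.2) p.1]
    _ = φ n := by
        rw [Finset.sum_eq_single ((0 : ℕ), n)]
        · rfl
        · rintro ⟨i, j⟩ hmem hne
          rw [HasAntidiagonal.mem_antidiagonal] at hmem
          rw [if_neg]
          intro h
          exact hne (Prod.ext h (by omega))
        · intro h
          exact absurd (by simp) h

/-- the maps `T_± := id_{B[[λ]]} + Δ_± ∘ Q` (with `Q := Σ_{n≥1} λⁿ P_(n)` and `Δ_±`
acting coefficientwise) restrict to `ℝ[[λ]]`-module isomorphisms from the deformed solution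
module `Sol_{P_⋆} = ker P_⋆` onto the undeformed solution module `Sol_P = ker P`, with inverse
`T_±⁻¹ = id_{B[[λ]]} − Δ_⋆± ∘ Q`. -/
theorem statement_5
    (A : Submodule ℝ B)
    -- the family `P_(n)` (`P := P_(0)`), with `P(A) ⊆ A` and `P_(n) : B → A` for `n ≥ 1`
    (Pn : ℕ → B →ₗ[ℝ] B)
    (hPA : ∀ a ∈ A, Pn 0 a ∈ A)
    (hPpos : ∀ n, 0 < n → ∀ u : B, Pn n u ∈ A)
    -- the undeformed retarded/advanced Green's operators `Δ_±` (defined on `A`)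
    (Dp Dm : B →ₗ[ℝ] B)
    (hPDp : ∀ a ∈ A, Pn 0 (Dp a) = a) (hDpP : ∀ a ∈ A, Dp (Pn 0 a) = a)
    (hPDm : ∀ a ∈ A, Pn 0 (Dm a) = a) (hDmP : ∀ a ∈ A, Dm (Pn 0 a) = a)
 :
    (∃ e : ↥(LinearMap.ker (starMap Pn)) ≃ₗ[PowerSeries ℝ]
           ↥(LinearMap.ker (cwMap (Pn 0))),
      (∀ u : ↥(LinearMap.ker (starMap Pn)),
        (e u : ℕ → B)
          = (LinearMap.id + cwMap Dp ∘ₗ starMap (posPart Pn) :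
              (ℕ → B) →ₗ[PowerSeries ℝ] (ℕ → B)) (u : ℕ → B)) ∧
      (∀ v : ↥(LinearMap.ker (cwMap (Pn 0))),
        (e.symm v : ℕ → B)
          = (LinearMap.id - starMap (dGreen Dp Pn) ∘ₗ starMap (posPart Pn) :
              (ℕ → B) →ₗ[PowerSeries ℝ] (ℕ → B)) (v : ℕ → B))) ∧
    (∃ e : ↥(LinearMap.ker (starMap Pn)) ≃ₗ[PowerSeries ℝ]
           ↥(LinearMap.ker (cwMap (Pn 0))),
      (∀ u : ↥(LinearMap.ker (starMap Pn)),
        (e u : ℕ → B)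
          = (LinearMap.id + cwMap Dm ∘ₗ starMap (posPart Pn) :
              (ℕ → B) →ₗ[PowerSeries ℝ] (ℕ → B)) (u : ℕ → B)) ∧
      (∀ v : ↥(LinearMap.ker (cwMap (Pn 0))),
        (e.symm v : ℕ → B)
          = (LinearMap.id - starMap (dGreen Dm Pn) ∘ₗ starMap (posPart Pn) :
              (ℕ → B) →ₗ[PowerSeries ℝ] (ℕ → B)) (v : ℕ → B))) := by
  have main : ∀ D : B →ₗ[ℝ] B, (∀ a ∈ A, Pn 0 (D a) = a) → (∀ a ∈ A, D (Pn 0 a) = a) →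
      ∃ e : ↥(LinearMap.ker (starMap Pn)) ≃ₗ[PowerSeries ℝ]
           ↥(LinearMap.ker (cwMap (Pn 0))),
      (∀ u : ↥(LinearMap.ker (starMap Pn)),
        (e u : ℕ → B)
          = (LinearMap.id + cwMap D ∘ₗ starMap (posPart Pn) :
              (ℕ → B) →ₗ[PowerSeries ℝ] (ℕ → B)) (u : ℕ → B)) ∧
      (∀ v : ↥(LinearMap.ker (cwMap (Pn 0))),
        (e.symm v : ℕ → B)
          = (LinearMap.id - starMap (dGreen D Pn) ∘ₗ starMap (posPart Pn) :
              (ℕ → B) →ₗ[PowerSeries ℝ] (ℕ → B)) (v : ℕ → B)) := by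
    intro D hPD hDP
    set T : (ℕ → B) →ₗ[PowerSeries ℝ] (ℕ → B) :=
      LinearMap.id + cwMap D ∘ₗ starMap (posPart Pn) with hT
    set S : (ℕ → B) →ₗ[PowerSeries ℝ] (ℕ → B) :=
      LinearMap.id - starMap (dGreen D Pn) ∘ₗ starMap (posPart Pn) with hS
    have haa : ∀ u : ℕ → B, starMap Pn u = 0 → cwMap (Pn 0) (T u) = 0 := by
      intro u hu
      funext n
      have hu' : starMap (K := ℝ) Pn u n = 0 := by rw [hu]; rfl
      calc cwMap (K := ℝ) (Pn 0) (T u) n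
          = Pn 0 (u n + D (starMap (K := ℝ) (posPart Pn) u n)) := rfl
        _ = Pn 0 (u n) + Pn 0 (D (starMap (K := ℝ) (posPart Pn) u n)) := map_add _ _ _
        _ = Pn 0 (u n) + starMap (K := ℝ) (posPart Pn) u n := by
            rw [hPD _ (NC_Q_mem A Pn hPpos u n)]
        _ = 0 := by rw [← NC_starMap_split Pn u n, hu']
    have hbb : ∀ v : ℕ → B, cwMap (Pn 0) v = 0 → starMap Pn (S v) = 0 := by
      intro v hv
      have hv' : ∀ n, Pn 0 (v n) = 0 := fun n => congrFun hv n
      have hSv : S v = v - starMap (K := ℝ) (dGreen D Pn)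
          (starMap (K := ℝ) (posPart Pn) v) := rfl
      rw [hSv, map_sub,
        NC_PstarDstar A Pn hPpos D hPD _ (NC_Q_mem A Pn hPpos v)]
      funext n
      show starMap (K := ℝ) Pn v n - starMap (K := ℝ) (posPart Pn) v n = (0 : ℕ → B) n
      rw [NC_starMap_split, hv' n, zero_add, sub_self]
      rfl
    have hST : ∀ u : ℕ → B, starMap Pn u = 0 → S (T u) = u := by
      intro u hu
      have claim1 : starMap (K := ℝ) (posPart Pn) (T u)
          = starMap (K := ℝ) Pn
              (cwMap (K := ℝ) D (starMap (K := ℝ) (posPart Pn) u)) := by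
        funext n
        rw [NC_starMap_split Pn
          (cwMap (K := ℝ) D (starMap (K := ℝ) (posPart Pn) u)) n]
        have h1 : Pn 0 (cwMap (K := ℝ) D (starMap (K := ℝ) (posPart Pn) u) n)
            = starMap (K := ℝ) (posPart Pn) u n :=
          hPD _ (NC_Q_mem A Pn hPpos u n)
        rw [h1]
        have h2 : T u = u + cwMap (K := ℝ) D (starMap (K := ℝ) (posPart Pn) u) := rfl
        rw [h2, map_add]
        rfl
      have hψ : ∀ k, starMap (K := ℝ) Pn
          (cwMap (K := ℝ) D (starMap (K := ℝ) (posPart Pn) u)) k ∈ A := by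
        intro k
        rw [NC_starMap_split]
        refine A.add_mem ?_ (NC_Q_mem A Pn hPpos _ k)
        have h1 : Pn 0 (cwMap (K := ℝ) D (starMap (K := ℝ) (posPart Pn) u) k)
            = starMap (K := ℝ) (posPart Pn) u k :=
          hPD _ (NC_Q_mem A Pn hPpos u k)
        rw [h1]
        exact NC_Q_mem A Pn hPpos u k
      have claim2 : starMap (K := ℝ) (dGreen D Pn)
            (starMap (K := ℝ) (posPart Pn) (T u))
          = cwMap (K := ℝ) D (starMap (K := ℝ) (posPart Pn) u) := by
        rw [claim1]
        have hx : ∀ n, ∃ b ∈ A,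
            (starMap (K := ℝ) (dGreen D Pn)
              (starMap (K := ℝ) Pn
                (cwMap (K := ℝ) D (starMap (K := ℝ) (posPart Pn) u)))
             - cwMap (K := ℝ) D (starMap (K := ℝ) (posPart Pn) u)) n = D b := by
          intro n
          obtain ⟨b, hb, heq⟩ := NC_sum_image A D (antidiagonal n)
            (fun q => dGreen D Pn q.1
              (starMap (K := ℝ) Pn
                (cwMap (K := ℝ) D (starMap (K := ℝ) (posPart Pn) u)) q.2))
            (fun q _ => NC_dGreen_image A Pn hPpos D q.1 (hψ q.2))
          refine ⟨b - starMap (K := ℝ) (posPart Pn) u n,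
            A.sub_mem hb (NC_Q_mem A Pn hPpos u n), ?_⟩
          rw [map_sub]
          show (∑ q ∈ antidiagonal n, dGreen D Pn q.1
              (starMap (K := ℝ) Pn
                (cwMap (K := ℝ) D (starMap (K := ℝ) (posPart Pn) u)) q.2))
            - D (starMap (K := ℝ) (posPart Pn) u n) = _
          rw [heq]
        have hker : starMap (K := ℝ) Pn
            (starMap (K := ℝ) (dGreen D Pn)
              (starMap (K := ℝ) Pn
                (cwMap (K := ℝ) D (starMap (K := ℝ) (posPart Pn) u)))
             - cwMap (K := ℝ) D (starMap (K := ℝ) (posPart Pn) u)) = 0 := by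
          rw [map_sub, NC_PstarDstar A Pn hPpos D hPD _ hψ, sub_self]
        exact sub_eq_zero.mp (NC_inj A Pn D hPD _ hx hker)
      have h3 : S (T u) = T u - starMap (K := ℝ) (dGreen D Pn)
          (starMap (K := ℝ) (posPart Pn) (T u)) := rfl
      rw [h3, claim2]
      have h4 : T u = u + cwMap (K := ℝ) D (starMap (K := ℝ) (posPart Pn) u) := rfl
      rw [h4]
      exact add_sub_cancel_right u _
    have hTS : ∀ v : ℕ → B, cwMap (Pn 0) v = 0 → T (S v) = v := by
      intro v hv
      have hv' : ∀ n, Pn 0 (v n) = 0 := fun n => congrFun hv n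
      have hSv := hbb v hv
      have hQSv : ∀ n, starMap (K := ℝ) (posPart Pn) (S v) n = -Pn 0 (S v n) := by
        intro n
        have h := NC_starMap_split Pn (S v) n
        have h2 : starMap (K := ℝ) Pn (S v) n = 0 := by rw [hSv]; rfl
        rw [h2] at h
        exact eq_neg_of_add_eq_zero_left (by rw [add_comm]; exact h.symm)
      funext n
      have hTSv : T (S v) n = S v n + D (starMap (K := ℝ) (posPart Pn) (S v) n) := rfl
      rw [hTSv, hQSv n, map_neg]
      obtain ⟨b, hb, heq⟩ := NC_sum_image A D (antidiagonal n)
        (fun q => dGreen D Pn q.1 (starMap (K := ℝ) (posPart Pn) v q.2))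
        (fun q _ => NC_dGreen_image A Pn hPpos D q.1 (NC_Q_mem A Pn hPpos v q.2))
      have hyn : starMap (K := ℝ) (dGreen D Pn)
          (starMap (K := ℝ) (posPart Pn) v) n = D b := heq
      have hSvn : S v n = v n - D b := by rw [← hyn]; rfl
      rw [hSvn, map_sub, hv' n, hPD b hb, zero_sub, map_neg, neg_neg]
      exact sub_add_cancel _ _
    refine ⟨LinearEquiv.ofLinear
      (LinearMap.codRestrict (LinearMap.ker (cwMap (Pn 0)))
        (T ∘ₗ (LinearMap.ker (starMap Pn)).subtype)
        (fun u => LinearMap.mem_ker.2 (haa u (LinearMap.mem_ker.1 u.2))))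
      (LinearMap.codRestrict (LinearMap.ker (starMap Pn))
        (S ∘ₗ (LinearMap.ker (cwMap (Pn 0))).subtype)
        (fun v => LinearMap.mem_ker.2 (hbb v (LinearMap.mem_ker.1 v.2))))
      ?_ ?_, fun u => rfl, fun v => rfl⟩
    · apply LinearMap.ext; intro v
      apply Subtype.ext
      show T (S (v : ℕ → B)) = (v : ℕ → B)
      exact hTS v (LinearMap.mem_ker.1 v.2)
    · apply LinearMap.ext; intro u
      apply Subtype.ext
      show S (T (u : ℕ → B)) = (u : ℕ → B)
      exact hST u (LinearMap.mem_ker.1 u.2)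
  exact ⟨main Dp hPDp hDpP, main Dm hPDm hDmP⟩

end NCQFT
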